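/- arXiv:1709.09561 — 8 statements merged into one kernel-verified Lean document; each statement's English description precedes it below -/
import Mathlib

section
/- Let Q be an N×N real Z-matrix (N ≥ 1) and set B = exp(−Q), where exp is the matrix exponential. Then B is a nonnegative matrix with det(B) > 0, and for every positive integer n there exists a nonnegative matrix K with K^n = B; that is, B is strongly infinitely divisible. -/
open Matrix

/-- A real square matrix is (entrywise) nonnegative if all of its entries are nonnegative. -/
def IsNonnegMatrix {ι : Type*} (B : Matrix ι ι ℝ) : Prop :=
  ∀ i j, 0 ≤ B i j

/-- A Z-matrix is a real square matrix all of whose off-diagonal entries are nonpositive. -/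
def IsZMatrix {ι : Type*} (Q : Matrix ι ι ℝ) : Prop :=
  ∀ i j, i ≠ j → Q i j ≤ 0

/-- A nonnegative matrix `B` is infinitely divisible if for every positive integer `n`
there exists a nonnegative matrix `K` with `K ^ n = B`. -/
def IsInfinitelyDivisible {ι : Type*} [Fintype ι] [DecidableEq ι] (B : Matrix ι ι ℝ) : Prop :=
  ∀ n : ℕ, 0 < n → ∃ K : Matrix ι ι ℝ, IsNonnegMatrix K ∧ K ^ n = B

/-- `B` is strongly infinitely divisible if it is infinitely divisible and `det B > 0`. -/
def IsStronglyInfinitelyDivisible {ι : Type*} [Fintype ι] [DecidableEq ι]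
    (B : Matrix ι ι ℝ) : Prop :=
  IsInfinitelyDivisible B ∧ 0 < B.det

/-- An inverse M-matrix is an invertible nonnegative matrix whose inverse is a Z-matrix. -/
def IsInverseMMatrix {ι : Type*} [Fintype ι] [DecidableEq ι] (K : Matrix ι ι ℝ) : Prop :=
  IsUnit K.det ∧ IsNonnegMatrix K ∧ IsZMatrix K⁻¹

/-- A stochastic matrix is a nonnegative square matrix each of whose rows sums to `1`. -/
def IsStochasticMatrix {ι : Type*} [Fintype ι] (P : Matrix ι ι ℝ) : Prop :=
  IsNonnegMatrix P ∧ ∀ i, ∑ j, P i j = 1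

/-- An intensity matrix is a real square matrix whose off-diagonal entries are nonnegative
and each of whose rows sums to `0`. -/
def IsIntensityMatrix {ι : Type*} [Fintype ι] (R : Matrix ι ι ℝ) : Prop :=
  (∀ i j, i ≠ j → 0 ≤ R i j) ∧ ∀ i, ∑ j, R i j = 0

/-! Shifting a Z-matrix `Q` by a central scalar `c • 1` with `c ≥ max Qᵢᵢ` makes `c • 1 - Q` entrywise
nonnegative, so `exp (-Q) = e⁻ᶜ • exp (c • 1 - Q)` is nonnegative, its power series having
nonnegative terms. The `n`-th root `exp (-Q / n)` is of the same form, and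
`det (exp (-Q)) = det (exp (-Q / 2)) ^ 2` is positive because matrix exponentials are invertible. -/

open NormedSpace

section Nonneg

variable {ι : Type*} [Fintype ι]

theorem IsNonnegMatrix.mul {A B : Matrix ι ι ℝ} (hA : IsNonnegMatrix A) (hB : IsNonnegMatrix B) :
    IsNonnegMatrix (A * B) := fun i j =>
  Finset.sum_nonneg fun k _ => mul_nonneg (hA i k) (hB k j)

variable [DecidableEq ι]

theorem IsNonnegMatrix.pow {A : Matrix ι ι ℝ} (hA : IsNonnegMatrix A) (n : ℕ) :
    IsNonnegMatrix (A ^ n) := by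
  induction n with
  | zero => intro i j; rw [pow_zero, one_apply]; split_ifs <;> norm_num
  | succ n ih => rw [pow_succ]; exact ih.mul hA

theorem IsNonnegMatrix.exp {A : Matrix ι ι ℝ} (hA : IsNonnegMatrix A) :
    IsNonnegMatrix (NormedSpace.exp A) := by
  intro i j
  have hsum : HasSum (fun n => ((n.factorial : ℝ)⁻¹ • A ^ n) i j) (NormedSpace.exp A i j) :=
    open scoped Norms.Operator in
    Pi.hasSum.mp (Pi.hasSum.mp (exp_series_hasSum_exp' (𝕂 := ℝ) A) i) j
  exact hsum.nonneg fun n => mul_nonneg (by positivity) (hA.pow n i j)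

theorem isNonnegMatrix_exp_scalar (c : ℝ) : IsNonnegMatrix (exp (scalar ι c)) := by
  intro i j
  rw [scalar_apply, exp_diagonal, diagonal_apply]
  split_ifs
  · rw [Pi.coe_exp, ← Real.exp_eq_exp_ℝ]
    exact (Real.exp_pos c).le
  · rfl

end Nonneg

section ZMatrix

variable {ι : Type*} {Q : Matrix ι ι ℝ}

theorem IsZMatrix.smul (hQ : IsZMatrix Q) {r : ℝ} (hr : 0 ≤ r) : IsZMatrix (r • Q) :=
  fun i j hij => mul_nonpos_of_nonneg_of_nonpos hr (hQ i j hij)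

variable [Fintype ι] [DecidableEq ι]

theorem IsZMatrix.exists_isNonnegMatrix_scalar_sub (hQ : IsZMatrix Q) :
    ∃ c : ℝ, IsNonnegMatrix (scalar ι c - Q) := by
  obtain ⟨c, hc⟩ := Finite.exists_le Q.diag
  refine ⟨c, fun i j => ?_⟩
  rcases eq_or_ne i j with rfl | hij
  · simpa using hc i
  · simpa [hij] using hQ i j hij

theorem IsZMatrix.isNonnegMatrix_exp_neg (hQ : IsZMatrix Q) : IsNonnegMatrix (exp (-Q)) := by
  obtain ⟨c, hc⟩ := hQ.exists_isNonnegMatrix_scalar_sub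
  have hsplit : -Q = scalar ι (-c) + (scalar ι c - Q) := by
    rw [map_neg]
    abel
  rw [hsplit, exp_add_of_commute _ _ (scalar_commute _ (Commute.all _) _)]
  exact (isNonnegMatrix_exp_scalar _).mul hc.exp

end ZMatrix

section Exp

variable {ι : Type*} [Fintype ι] [DecidableEq ι]

theorem Matrix.exp_inv_smul_pow (A : Matrix ι ι ℝ) {n : ℕ} (hn : n ≠ 0) :
    exp ((n : ℝ)⁻¹ • A) ^ n = exp A := by
  rw [← exp_nsmul, ← Nat.cast_smul_eq_nsmul ℝ, smul_smul, mul_inv_cancel₀ (by exact_mod_cast hn),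
    one_smul]

theorem Matrix.det_exp_pos (A : Matrix ι ι ℝ) : 0 < (exp A).det := by
  have hunit : IsUnit (exp (((2 : ℕ) : ℝ)⁻¹ • A)).det :=
    (isUnit_iff_isUnit_det _).mp (Matrix.isUnit_exp _)
  rw [← exp_inv_smul_pow A two_ne_zero, det_pow]
  exact pow_two_pos_of_ne_zero hunit.ne_zero

end Exp

theorem stmt0_general (N : ℕ) (Q : Matrix (Fin N) (Fin N) ℝ) (hQ : IsZMatrix Q) :
    IsNonnegMatrix (NormedSpace.exp (-Q)) ∧
      IsStronglyInfinitelyDivisible (NormedSpace.exp (-Q)) := by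
  refine ⟨hQ.isNonnegMatrix_exp_neg, fun n hn => ?_, det_exp_pos _⟩
  refine ⟨exp ((n : ℝ)⁻¹ • -Q), ?_, exp_inv_smul_pow _ hn.ne'⟩
  rw [smul_neg]
  exact (hQ.smul (by positivity)).isNonnegMatrix_exp_neg

theorem stmt0 (N : ℕ) (hN : 1 ≤ N) (Q : Matrix (Fin N) (Fin N) ℝ) (hQ : IsZMatrix Q) :
    IsNonnegMatrix (NormedSpace.exp (-Q)) ∧
      IsStronglyInfinitelyDivisible (NormedSpace.exp (-Q)) :=
  stmt0_general N Q hQ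
end

section
/- Let n be a positive integer and B an N×N nonnegative real matrix. Then B = K^n for some inverse M-matrix K if and only if there exist a real number c > 0 and a nonnegative matrix P with spectral radius ρ(P) < 1 such that B = c · Σ_{k=0}^{∞} C(n+k−1, k) · P^k, where C(n+k−1, k) is the binomial coefficient and the series converges in the space of N×N real matrices. -/
/-!
If `K⁻¹` is a Z-matrix and `t > 0` dominates its diagonal, then `P = 1 - t⁻¹ K⁻¹` is nonnegative
and `t K` is a nonnegative left inverse of `1 - P`. An eigenvector `x` of `P` for an eigenvalue
`μ` with `|μ| ≥ 1` would give `|x| ≤ P |x|`, so `|x| = t K (1 - P) |x| ≤ 0`; hence `ρ(P) < 1`.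
By Gelfand's formula `‖P ^ k‖` then decays geometrically, so `(1 - P)⁻¹ = ∑ P ^ k`, and Cauchy
products give `(∑ P ^ k) ^ n = ∑ C(n + k - 1, k) P ^ k`; thus `K ^ n = t⁻ⁿ ∑ C(n + k - 1, k) P ^ k`.
Conversely, `K = c ^ (1 / n) ∑ P ^ k` is nonnegative with inverse `c ^ (-1 / n) (1 - P)`.
-/

open Matrix

open Filter
open scoped NNReal ENNReal

theorem spectrum.eventually_nnnorm_pow_le_of_spectralRadius_lt {A : Type*} [NormedRing A]
    [NormedAlgebra ℂ A] [CompleteSpace A] {a : A} {r : ℝ≥0} (h : spectralRadius ℂ a < r) :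
    ∀ᶠ k in atTop, ‖a ^ k‖₊ ≤ r ^ k := by
  filter_upwards [(pow_nnnorm_pow_one_div_tendsto_nhds_spectralRadius a).eventually_lt_const h,
    eventually_gt_atTop 0] with k hk hk₀
  have := ENNReal.pow_le_pow_left (n := k) hk.le
  rwa [← ENNReal.rpow_natCast, ← ENNReal.rpow_mul, one_div_mul_cancel (by positivity),
    ENNReal.rpow_one, ← ENNReal.coe_pow, ENNReal.coe_le_coe] at this

section NormedRing

variable {R : Type*} [NormedRing R] {x : R} {r : ℝ≥0}

theorem summable_norm_choose_nsmul_pow (hr : r < 1) (hx : ∀ᶠ k in atTop, ‖x ^ k‖₊ ≤ r ^ k)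
    (m : ℕ) : Summable fun k ↦ ‖(k + m).choose m • x ^ k‖ := by
  refine .of_norm_bounded_eventually (g := fun k ↦ ((k + m).choose m : ℝ) * (r : ℝ) ^ k)
    (summable_choose_mul_geometric_of_norm_lt_one m (by simpa using hr)) ?_
  rw [Nat.cofinite_eq_atTop]
  filter_upwards [hx] with k hk
  rw [norm_norm]
  exact norm_nsmul_le.trans (by gcongr; exact_mod_cast hk)

theorem hasSum_choose_nsmul_pow [CompleteSpace R] (hr : r < 1)
    (hx : ∀ᶠ k in atTop, ‖x ^ k‖₊ ≤ r ^ k) (m : ℕ) :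
    HasSum (fun k ↦ (k + m).choose m • x ^ k) ((∑' k, x ^ k) ^ (m + 1)) := by
  have hs m := summable_norm_choose_nsmul_pow hr hx m
  induction m with
  | zero => simpa using (hs 0).of_norm.hasSum
  | succ m ih =>
    have h0 : Summable fun k ↦ ‖x ^ k‖ := by simpa using hs 0
    convert hasSum_sum_range_mul_of_summable_norm' (hs m) ih.summable h0 h0.of_norm using 1
    · ext k
      have : ∀ i ∈ Finset.range (k + 1), (i + m).choose m • x ^ i * x ^ (k - i) =
          (i + m).choose m • x ^ k := fun i hi ↦ by
        rw [smul_mul_assoc, ← pow_add, Nat.add_sub_cancel' (Finset.mem_range_succ_iff.mp hi)]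
      rw [Finset.sum_congr rfl this, ← Finset.sum_smul, Nat.sum_range_add_choose, add_assoc]
    · rw [ih.tsum_eq, pow_succ]

end NormedRing

theorem Matrix.mem_roots_charpoly_iff_mem_spectrum {ι K : Type*} [Fintype ι] [DecidableEq ι]
    [Field K] {A : Matrix ι ι K} {μ : K} : μ ∈ A.charpoly.roots ↔ μ ∈ spectrum K A := by
  rw [Polynomial.mem_roots A.charpoly_monic.ne_zero, mem_spectrum_iff_isRoot_charpoly]

theorem IsZMatrix.isNonnegMatrix_one_sub_inv_smul {ι : Type*} [DecidableEq ι]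
    {Q : Matrix ι ι ℝ} (hQ : IsZMatrix Q) {t : ℝ} (ht : 0 < t) (hdiag : ∀ i, Q i i ≤ t) :
    IsNonnegMatrix (1 - t⁻¹ • Q) := fun i j ↦ by
  by_cases hij : i = j
  · subst hij
    simpa [← div_eq_inv_mul, div_le_one ht] using hdiag i
  · simpa [one_apply_ne hij] using
      mul_nonpos_of_nonneg_of_nonpos (inv_nonneg.mpr ht.le) (hQ i j hij)

namespace IsNonnegMatrix

variable {ι : Type*} {P K : Matrix ι ι ℝ}

theorem smul (hP : IsNonnegMatrix P) {c : ℝ} (hc : 0 ≤ c) : IsNonnegMatrix (c • P) :=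
  fun i j ↦ mul_nonneg hc (hP i j)

theorem of_hasSum {f : ℕ → Matrix ι ι ℝ} (hf : ∀ k, IsNonnegMatrix (f k)) (hS : HasSum f P) :
    IsNonnegMatrix P :=
  fun i j ↦ hasSum_le (fun k ↦ hf k i j) hasSum_zero (Pi.hasSum.mp (Pi.hasSum.mp hS i) j)

theorem isZMatrix_smul_one_sub [DecidableEq ι] (hP : IsNonnegMatrix P) {s : ℝ} (hs : 0 ≤ s) :
    IsZMatrix (s • (1 - P)) := fun i j hij ↦ by
  simpa [one_apply_ne hij] using mul_nonneg hs (hP i j)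

variable [Fintype ι] [DecidableEq ι]

theorem pow_s6 (hP : IsNonnegMatrix P) (k : ℕ) : IsNonnegMatrix (P ^ k) := by
  induction k with
  | zero => intro i j; by_cases h : i = j <;> simp [one_apply, h]
  | succ k ih =>
    intro i j
    rw [pow_succ, mul_apply]
    exact Finset.sum_nonneg fun l _ ↦ mul_nonneg (ih i l) (hP l j)

theorem eq_zero_of_le_mulVec (hK : IsNonnegMatrix K) (hKP : K * (1 - P) = 1) {y : ι → ℝ}
    (hy : 0 ≤ y) (hPy : y ≤ P *ᵥ y) : y = 0 := by
  have hy_eq : y = K *ᵥ ((1 - P) *ᵥ y) := by rw [mulVec_mulVec, hKP, one_mulVec]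
  refine le_antisymm (fun i ↦ ?_) hy
  rw [hy_eq]
  refine Finset.sum_nonpos fun j _ ↦ mul_nonpos_of_nonneg_of_nonpos (hK i j) ?_
  simpa [sub_mulVec] using hPy j

theorem norm_lt_one_of_mem_roots (hP : IsNonnegMatrix P) (hK : IsNonnegMatrix K)
    (hKP : K * (1 - P) = 1) {μ : ℂ} (hμ : μ ∈ (P.map Complex.ofReal).charpoly.roots) :
    ‖μ‖ < 1 := by
  rw [mem_roots_charpoly_iff_mem_spectrum, ← spectrum_toLin',
    ← Module.End.hasEigenvalue_iff_mem_spectrum] at hμ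
  obtain ⟨x, hx⟩ := hμ.exists_hasEigenvector
  have hAx : P.map Complex.ofReal *ᵥ x = μ • x := by
    simpa [toLin'_apply] using hx.apply_eq_smul
  set y : ι → ℝ := fun i ↦ ‖x i‖
  have hPy : ‖μ‖ • y ≤ P *ᵥ y := fun i ↦ by
    calc ‖μ‖ * ‖x i‖ = ‖∑ j, (P i j : ℂ) * x j‖ := by
          rw [← norm_mul, ← smul_eq_mul, ← Pi.smul_apply, ← hAx]; rfl
      _ ≤ ∑ j, ‖(P i j : ℂ) * x j‖ := norm_sum_le _ _
      _ = (P *ᵥ y) i := by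
          simp [mulVec, dotProduct, y, Complex.norm_real, abs_of_nonneg (hP i _)]
  by_contra! hμ1
  have hy0 : y = 0 := hK.eq_zero_of_le_mulVec hKP (fun i ↦ norm_nonneg (x i))
    fun i ↦ le_trans (le_mul_of_one_le_left (norm_nonneg _) hμ1) (hPy i)
  exact hx.2 (funext fun i ↦ norm_eq_zero.mp (congrFun hy0 i))

end IsNonnegMatrix

namespace Matrix

variable {ι : Type*} [Fintype ι] [DecidableEq ι] {P : Matrix ι ι ℝ}

-- Any submultiplicative norm would do; the Frobenius norm is preserved by `map Complex.ofReal`.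
-- Its topology is the product topology only up to unfolding, so results are moved by `exact`.
attribute [local instance] frobeniusNormedAddCommGroup frobeniusNormedRing frobeniusNormedSpace
  frobeniusNormedAlgebra

theorem exists_eventually_nnnorm_pow_le_of_roots_lt_one
    (hP : ∀ μ ∈ (P.map Complex.ofReal).charpoly.roots, ‖μ‖ < 1) :
    ∃ r : ℝ≥0, r < 1 ∧ ∀ᶠ k in atTop, ‖P ^ k‖₊ ≤ r ^ k := by
  set A := P.map Complex.ofReal
  have hA : spectralRadius ℂ A < 1 := by
    rcases (spectrum ℂ A).eq_empty_or_nonempty with h | h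
    · simp [spectralRadius, h]
    · exact spectrum.spectralRadius_lt_of_forall_lt_of_nonempty h fun μ hμ ↦
        mod_cast hP μ (mem_roots_charpoly_iff_mem_spectrum.mpr hμ)
  obtain ⟨r, hAr, hr⟩ := ENNReal.lt_iff_exists_nnreal_btwn.mp hA
  refine ⟨r, mod_cast hr, ?_⟩
  filter_upwards [spectrum.eventually_nnnorm_pow_le_of_spectralRadius_lt hAr] with k hk
  have hAk : A ^ k = (P ^ k).map Complex.ofReal := (Complex.ofRealHom.mapMatrix.map_pow P k).symm
  rwa [hAk, frobenius_nnnorm_map_eq _ _ Complex.nnnorm_real] at hk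

theorem summable_pow_of_roots_lt_one
    (hP : ∀ μ ∈ (P.map Complex.ofReal).charpoly.roots, ‖μ‖ < 1) : Summable (P ^ ·) := by
  obtain ⟨r, hr, hPr⟩ := exists_eventually_nnnorm_pow_le_of_roots_lt_one hP
  have := (summable_norm_choose_nsmul_pow hr hPr 0).of_norm
  simp only [add_zero, Nat.choose_zero_right, one_nsmul] at this
  exact this

theorem hasSum_choose_smul_pow_of_roots_lt_one
    (hP : ∀ μ ∈ (P.map Complex.ofReal).charpoly.roots, ‖μ‖ < 1) {n : ℕ} (hn : 0 < n) :
    HasSum (fun k : ℕ ↦ ((n + k - 1).choose k : ℝ) • P ^ k) ((∑' k, P ^ k) ^ n) := by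
  obtain ⟨r, hr, hPr⟩ := exists_eventually_nnnorm_pow_le_of_roots_lt_one hP
  have h := hasSum_choose_nsmul_pow hr hPr (n - 1)
  rw [Nat.sub_add_cancel hn] at h
  have hcoeff k : ((n + k - 1).choose k : ℝ) • P ^ k = (k + (n - 1)).choose (n - 1) • P ^ k := by
    rw [Nat.cast_smul_eq_nsmul, show n + k - 1 = k + (n - 1) by omega, Nat.choose_symm_add]
  simp only [hcoeff]
  exact h

end Matrix

theorem stmt6_general (N : ℕ) (n : ℕ) (hn : 0 < n) (B : Matrix (Fin N) (Fin N) ℝ) :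
    (∃ K : Matrix (Fin N) (Fin N) ℝ, IsInverseMMatrix K ∧ B = K ^ n) ↔
      ∃ c : ℝ, 0 < c ∧ ∃ P : Matrix (Fin N) (Fin N) ℝ, IsNonnegMatrix P ∧
        (∀ μ : ℂ, μ ∈ (P.map Complex.ofReal).charpoly.roots → ‖μ‖ < 1) ∧
        Summable (fun k : ℕ => (((n + k - 1).choose k : ℝ)) • P ^ k) ∧
        B = c • ∑' k : ℕ, (((n + k - 1).choose k : ℝ)) • P ^ k := by
  constructor
  · rintro ⟨K, ⟨hdet, hK, hZ⟩, rfl⟩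
    obtain ⟨b, hb⟩ := (Set.finite_range fun i ↦ K⁻¹ i i).bddAbove
    set t := max b 1
    have ht : 0 < t := lt_max_of_lt_right one_pos
    set P := 1 - t⁻¹ • K⁻¹
    have hP : IsNonnegMatrix P :=
      hZ.isNonnegMatrix_one_sub_inv_smul ht fun i ↦ (hb ⟨i, rfl⟩).trans (le_max_left _ _)
    have htKP : t • K * (1 - P) = 1 := by
      rw [sub_sub_cancel, smul_mul_smul_comm, mul_inv_cancel₀ ht.ne', one_smul,
        mul_nonsing_inv K hdet]
    have hroots μ := hP.norm_lt_one_of_mem_roots (hK.smul ht.le) htKP (μ := μ)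
    have htK : t • K = ∑' k, P ^ k :=
      left_inv_eq_right_inv htKP (summable_pow_of_roots_lt_one hroots).one_sub_mul_tsum_pow
    have hser := hasSum_choose_smul_pow_of_roots_lt_one hroots hn
    refine ⟨t⁻¹ ^ n, by positivity, P, hP, hroots, hser.summable, ?_⟩
    rw [hser.tsum_eq, ← htK, smul_pow, smul_smul, ← mul_pow, inv_mul_cancel₀ ht.ne', one_pow,
      one_smul]
  · rintro ⟨c, hc, P, hP, hroots, -, rfl⟩
    have hsum := summable_pow_of_roots_lt_one hroots
    set d := c ^ (n : ℝ)⁻¹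
    have hd : 0 < d := by positivity
    have hKinv : (d • ∑' k, P ^ k) * (d⁻¹ • (1 - P)) = 1 := by
      rw [smul_mul_smul_comm, mul_inv_cancel₀ hd.ne', one_smul, hsum.tsum_pow_mul_one_sub]
    refine ⟨d • ∑' k, P ^ k, ⟨isUnit_det_of_right_inverse hKinv, ?_, ?_⟩, ?_⟩
    · exact (IsNonnegMatrix.of_hasSum hP.pow_s6 hsum.hasSum).smul hd.le
    · rw [inv_eq_right_inv hKinv]
      exact hP.isZMatrix_smul_one_sub (inv_nonneg.mpr hd.le)
    · rw [(hasSum_choose_smul_pow_of_roots_lt_one hroots hn).tsum_eq, smul_pow,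
        Real.rpow_inv_natCast_pow hc.le hn.ne']

theorem stmt6 (N : ℕ) (n : ℕ) (hn : 0 < n) (B : Matrix (Fin N) (Fin N) ℝ)
    (hBnn : IsNonnegMatrix B) :
    (∃ K : Matrix (Fin N) (Fin N) ℝ, IsInverseMMatrix K ∧ B = K ^ n) ↔
      ∃ c : ℝ, 0 < c ∧ ∃ P : Matrix (Fin N) (Fin N) ℝ, IsNonnegMatrix P ∧
        (∀ μ : ℂ, μ ∈ (P.map Complex.ofReal).charpoly.roots → ‖μ‖ < 1) ∧
        Summable (fun k : ℕ => (((n + k - 1).choose k : ℝ)) • P ^ k) ∧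
        B = c • ∑' k : ℕ, (((n + k - 1).choose k : ℝ)) • P ^ k :=
  stmt6_general N n hn B
end

section
/- Every strongly infinitely divisible N×N nonnegative matrix B has strictly positive diagonal entries: B_{ii} > 0 for all i. -/
open Matrix

/-!
If `K ^ n = B` with `K` nonnegative and `det B > 0`, then `det K ≠ 0`, so some term of the
Leibniz expansion of `det K` is nonzero: there is a permutation `σ` with `K i (σ i) > 0` for
every `i`. Following `σ` for `n` steps is a walk of positive weight from `i` to `σ ^ n i`, so
`(K ^ n) i (σ ^ n i) > 0`. Choosing `n = N!` makes `σ ^ n = 1`, whence `B i i > 0`.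
-/

namespace Matrix

variable {n R : Type*} [Fintype n] [DecidableEq n]

theorem exists_perm_forall_apply_ne_zero_of_det_ne_zero [CommRing R] {A : Matrix n n R}
    (hA : A.det ≠ 0) : ∃ σ : Equiv.Perm n, ∀ i, A i (σ i) ≠ 0 := by
  rw [← det_transpose, det_apply] at hA
  obtain ⟨σ, -, hσ⟩ := Finset.exists_ne_zero_of_sum_ne_zero hA
  have hprod : ∏ i, Aᵀ (σ i) i ≠ 0 := fun h => hσ (by rw [h, smul_zero])
  exact ⟨σ, fun i hi => hprod (Finset.prod_eq_zero (Finset.mem_univ i) hi)⟩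

theorem pow_apply_perm_pow_pos [Semiring R] [LinearOrder R] [IsStrictOrderedRing R]
    {A : Matrix n n R} (hA : ∀ i j, 0 ≤ A i j)
    {σ : Equiv.Perm n} (hσ : ∀ i, 0 < A i (σ i)) (k : ℕ) (i : n) :
    0 < (A ^ k) i ((σ ^ k) i) := by
  induction k with
  | zero => simp
  | succ k ih =>
    rw [pow_succ, mul_apply, pow_succ', Equiv.Perm.mul_apply]
    exact Finset.sum_pos' (fun j _ => mul_nonneg (pow_apply_nonneg hA k i j) (hA j _))
      ⟨(σ ^ k) i, Finset.mem_univ _, mul_pos ih (hσ _)⟩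

theorem pow_factorial_card_apply_self_pos [CommRing R] [LinearOrder R] [IsStrictOrderedRing R]
    {A : Matrix n n R} (hA : ∀ i j, 0 ≤ A i j) (hdet : A.det ≠ 0) (i : n) :
    0 < (A ^ (Fintype.card n).factorial) i i := by
  obtain ⟨σ, hσ⟩ := exists_perm_forall_apply_ne_zero_of_det_ne_zero hdet
  have hσ_pos : ∀ j, 0 < A j (σ j) := fun j => (hA j (σ j)).lt_of_ne' (hσ j)
  have hσ_pow : σ ^ (Fintype.card n).factorial = 1 := by
    rw [← Fintype.card_perm]
    exact pow_card_eq_one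
  simpa [hσ_pow] using pow_apply_perm_pow_pos hA hσ_pos (Fintype.card n).factorial i

end Matrix

theorem stmt11_general (N : ℕ) (B : Matrix (Fin N) (Fin N) ℝ)
    (hBdiv : IsStronglyInfinitelyDivisible B) :
    ∀ i, 0 < B i i := by
  intro i
  obtain ⟨hdiv, hdetB⟩ := hBdiv
  obtain ⟨K, hK, rfl⟩ := hdiv _ (Fintype.card (Fin N)).factorial_pos
  have hdetK : K.det ≠ 0 := by
    intro h
    rw [det_pow, h, zero_pow (Nat.factorial_ne_zero _)] at hdetB
    exact hdetB.false
  exact pow_factorial_card_apply_self_pos hK hdetK i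

theorem stmt11 (N : ℕ) (B : Matrix (Fin N) (Fin N) ℝ) (hBnn : IsNonnegMatrix B)
    (hBdiv : IsStronglyInfinitelyDivisible B) :
    ∀ i, 0 < B i i :=
  stmt11_general N B hBdiv
end

section
/- Let B be an N×N strongly infinitely divisible nonnegative matrix and let L be a strictly positive monomial matrix (L = D·P where D is a diagonal matrix with strictly positive diagonal entries and P is a permutation matrix). Then L⁻¹·B·L is strongly infinitely divisible. Consequently, L·B is strongly infinitely divisible if and only if B·L is strongly infinitely divisible. -/
open Matrix

lemma nn_mul {N : ℕ} {A C : Matrix (Fin N) (Fin N) ℝ} (hA : IsNonnegMatrix A)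
    (hC : IsNonnegMatrix C) : IsNonnegMatrix (A * C) := by
  intro i j
  rw [Matrix.mul_apply]
  exact Finset.sum_nonneg fun k _ => mul_nonneg (hA i k) (hC k j)

lemma myconj_pow {N : ℕ} (Li L K : Matrix (Fin N) (Fin N) ℝ) (h1 : Li * L = 1)
    (h2 : L * Li = 1) (n : ℕ) : (Li * K * L) ^ n = Li * K ^ n * L := by
  induction n with
  | zero => simp [h1]
  | succ n ih =>
    rw [pow_succ, ih, pow_succ]
    calc Li * K ^ n * L * (Li * K * L) = Li * (K ^ n * ((L * Li) * (K * L))) := by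
          simp only [mul_assoc]
    _ = Li * (K ^ n * K) * L := by rw [h2, one_mul]; simp only [mul_assoc]

lemma conj_keeps {N : ℕ} (Li L M : Matrix (Fin N) (Fin N) ℝ) (h1 : Li * L = 1)
    (hLinn : IsNonnegMatrix Li) (hLnn : IsNonnegMatrix L)
    (hM : IsStronglyInfinitelyDivisible M) :
    IsNonnegMatrix (Li * M * L) ∧ IsStronglyInfinitelyDivisible (Li * M * L) := by
  have h2 : L * Li = 1 := mul_eq_one_comm.mp h1
  have hMnn : IsNonnegMatrix M := by
    obtain ⟨K, hK, hKn⟩ := hM.1 1 one_pos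
    rw [pow_one] at hKn; rwa [← hKn]
  have hdet : (Li * M * L).det = M.det := by
    have : Li.det * L.det = 1 := by
      have := congrArg Matrix.det h1
      rwa [Matrix.det_mul, Matrix.det_one] at this
    rw [Matrix.det_mul, Matrix.det_mul]
    linear_combination M.det * this
  refine ⟨nn_mul (nn_mul hLinn hMnn) hLnn, ?_, by rw [hdet]; exact hM.2⟩
  intro n hn
  obtain ⟨K, hK, hKn⟩ := hM.1 n hn
  exact ⟨Li * K * L, nn_mul (nn_mul hLinn hK) hLnn, by rw [myconj_pow _ _ _ h1 h2, hKn]⟩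

theorem stmt13 (N : ℕ) (B : Matrix (Fin N) (Fin N) ℝ) (hBnn : IsNonnegMatrix B)
    (hBdiv : IsStronglyInfinitelyDivisible B)
    (d : Fin N → ℝ) (hd : ∀ i, 0 < d i) (σ : Equiv.Perm (Fin N))
    (L : Matrix (Fin N) (Fin N) ℝ) (hL : L = Matrix.diagonal d * σ.permMatrix ℝ) :
    (IsNonnegMatrix (L⁻¹ * B * L) ∧ IsStronglyInfinitelyDivisible (L⁻¹ * B * L)) ∧
      ((IsNonnegMatrix (L * B) ∧ IsStronglyInfinitelyDivisible (L * B)) ↔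
        (IsNonnegMatrix (B * L) ∧ IsStronglyInfinitelyDivisible (B * L))) := by
  -- explicit left inverse
  set M : Matrix (Fin N) (Fin N) ℝ :=
    Matrix.diagonal (fun i => (d (σ⁻¹ i))⁻¹) * (σ⁻¹ : Equiv.Perm (Fin N)).permMatrix ℝ with hM
  have hML : M * L = 1 := by
    rw [hM, hL, Matrix.mul_assoc, Equiv.Perm.permMatrix, Equiv.Perm.permMatrix,
      PEquiv.mul_toMatrix_toPEquiv, PEquiv.toMatrix_toPEquiv_mul]
    ext i j
    simp only [Matrix.diagonal_mul, Matrix.submatrix_apply, Matrix.diagonal_apply,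
      Matrix.one_apply, id_eq, Equiv.Perm.inv_def]
    rcases eq_or_ne i j with rfl | h
    · simp [inv_mul_cancel₀ (hd (σ.symm i)).ne']
    · have : ¬ (σ.symm i = σ.symm j) := fun hc => h (σ.symm.injective hc)
      simp [h, this]
  have hpm : ∀ (e : Fin N → ℝ), (∀ i, 0 ≤ e i) → ∀ τ : Equiv.Perm (Fin N),
      IsNonnegMatrix (Matrix.diagonal e * τ.permMatrix ℝ) := by
    intro e he τ
    refine nn_mul (fun i j => ?_) (fun i j => ?_)
    · rw [Matrix.diagonal_apply]; split
      · exact he i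
      · exact le_refl 0
    · rw [Equiv.Perm.permMatrix, PEquiv.toMatrix_apply]; split
      · exact zero_le_one
      · exact le_refl 0
  have hLnn : IsNonnegMatrix L := hL ▸ hpm d (fun i => (hd i).le) σ
  have hMnn : IsNonnegMatrix M := hM ▸ hpm _ (fun i => inv_nonneg.mpr (hd _).le) σ⁻¹
  have hLinv : L⁻¹ = M := Matrix.inv_eq_left_inv hML
  have h2 : L * M = 1 := mul_eq_one_comm.mp hML
  constructor
  · rw [hLinv]
    exact conj_keeps M L B hML hMnn hLnn hBdiv
  · constructor
    · intro h
      have hc := conj_keeps M L (L * B) hML hMnn hLnn h.2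
      have heq : M * (L * B) * L = B * L := by
        simp only [← Matrix.mul_assoc]; rw [hML, Matrix.one_mul]
      rwa [heq] at hc
    · intro h
      have hc := conj_keeps L M (B * L) h2 hLnn hMnn h.2
      have heq : L * (B * L) * M = L * B := by
        simp only [Matrix.mul_assoc]; rw [h2, Matrix.mul_one]
      rwa [heq] at hc
end

section
/- Let B be an N×N strongly infinitely divisible nonnegative matrix that is irreducible. Then B is strictly positive: B_{ij} > 0 for all i, j. -/
open Matrix

private lemma matmul_pos_iff {N : ℕ} (A C : Matrix (Fin N) (Fin N) ℝ)
    (hA : ∀ i j, 0 ≤ A i j) (hC : ∀ i j, 0 ≤ C i j) (i j : Fin N) :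
    0 < (A * C) i j ↔ ∃ a, 0 < A i a ∧ 0 < C a j := by
  rw [Matrix.mul_apply]
  constructor
  · intro h
    by_contra hc
    push_neg at hc
    have hz : ∀ a ∈ Finset.univ, A i a * C a j = 0 := by
      intro a _
      rcases (hA i a).lt_or_eq with h1 | h1
      · have h2 : C a j = 0 := le_antisymm (hc a h1) (hC a j)
        simp [h2]
      · simp [← h1]
    rw [Finset.sum_eq_zero hz] at h
    exact lt_irrefl 0 h
  · rintro ⟨a, ha1, ha2⟩
    exact Finset.sum_pos' (fun b _ => mul_nonneg (hA i b) (hC b j))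
      ⟨a, Finset.mem_univ a, mul_pos ha1 ha2⟩

private lemma pow_entry_nonneg {N : ℕ} (K : Matrix (Fin N) (Fin N) ℝ)
    (hK : ∀ i j, 0 ≤ K i j) : ∀ t, ∀ i j, 0 ≤ (K ^ t) i j := by
  intro t
  induction t with
  | zero =>
    intro i j
    rcases eq_or_ne i j with rfl | h
    · simp [Matrix.one_apply]
    · simp [Matrix.one_apply, h]
  | succ t ih =>
    intro i j
    rw [pow_succ, Matrix.mul_apply]
    exact Finset.sum_nonneg (fun a _ => mul_nonneg (ih i a) (hK a j))

theorem stmt14 (N : ℕ) (B : Matrix (Fin N) (Fin N) ℝ) (hBnn : IsNonnegMatrix B)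
    (hBdiv : IsStronglyInfinitelyDivisible B)
    (hirr : ∀ i j, ∃ m : ℕ, 0 < m ∧ 0 < (B ^ m) i j) :
    ∀ i j, 0 < B i j := by
  classical
  obtain ⟨hdiv, hdet⟩ := hBdiv
  set n : ℕ := N.factorial * (N ^ 2 + 1) with hn
  have hnpos : 0 < n := Nat.mul_pos (Nat.factorial_pos N) (Nat.succ_pos _)
  obtain ⟨K, hK, hKn⟩ := hdiv n hnpos
  have hKt : ∀ t i j, 0 ≤ (K ^ t) i j := pow_entry_nonneg K hK
  -- det K ≠ 0
  have hdetK : K.det ≠ 0 := by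
    intro h
    rw [← hKn, Matrix.det_pow, h, zero_pow hnpos.ne'] at hdet
    exact lt_irrefl 0 hdet
  -- permutation in the support of K
  obtain ⟨σ, hσ⟩ : ∃ σ : Equiv.Perm (Fin N), ∀ a, 0 < K (σ a) a := by
    rw [Matrix.det_apply] at hdetK
    obtain ⟨σ, -, hσ⟩ := Finset.exists_ne_zero_of_sum_ne_zero hdetK
    refine ⟨σ, fun a => ?_⟩
    have hprod : ∏ b, K (σ b) b ≠ 0 := by
      intro h0; apply hσ; rw [h0]; simp
    exact lt_of_le_of_ne (hK _ _)
      (Ne.symm (Finset.prod_ne_zero_iff.mp hprod a (Finset.mem_univ a)))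
  have hσfac : σ ^ N.factorial = 1 := by
    have h := pow_card_eq_one (G := Equiv.Perm (Fin N)) (x := σ)
    rwa [Fintype.card_perm, Fintype.card_fin] at h
  have hσn : ∀ m : ℕ, σ ^ (n * m) = 1 := by
    intro m
    have : n * m = N.factorial * ((N ^ 2 + 1) * m) := by rw [hn]; ring
    rw [this, pow_mul, hσfac, one_pow]
  -- closed walks: (K^r) (σ^r a) a > 0
  have hwalk : ∀ r : ℕ, ∀ a, 0 < (K ^ r) ((σ ^ r) a) a := by
    intro r
    induction r with
    | zero => intro a; simp [Matrix.one_apply]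
    | succ r ih =>
      intro a
      rw [pow_succ' K r, matmul_pos_iff K (K ^ r) hK (hKt r)]
      refine ⟨(σ ^ r) a, ?_, ih a⟩
      have he : (σ ^ (r + 1)) a = σ ((σ ^ r) a) := by
        rw [pow_succ' σ r]; rfl
      rw [he]
      exact hσ _
  -- positive diagonal of K^(n*m)
  have hdiagK : ∀ m : ℕ, ∀ a, 0 < (K ^ (n * m)) a a := by
    intro m a
    have h := hwalk (n * m) a
    rwa [hσn m, Equiv.Perm.one_apply] at h
  have hBpow : ∀ m : ℕ, B ^ m = K ^ (n * m) := by
    intro m; rw [← hKn, ← pow_mul]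
  -- support finsets
  set P : ℕ → Finset (Fin N × Fin N) :=
    fun t => Finset.univ.filter (fun p => 0 < (K ^ t) p.1 p.2) with hP
  have hmemP : ∀ t (p : Fin N × Fin N), p ∈ P t ↔ 0 < (K ^ t) p.1 p.2 := by
    intro t p; simp [hP]
  set f : Fin N × Fin N → Fin N × Fin N := fun p => (σ p.1, p.2) with hf
  have hinj : Function.Injective f := by
    rintro ⟨a, b⟩ ⟨c, d⟩ h
    simp only [hf, Prod.mk.injEq] at h
    exact Prod.ext (σ.injective h.1) h.2
  have hstep : ∀ t, (P t).image f ⊆ P (t + 1) := by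
    intro t q hq
    rw [Finset.mem_image] at hq
    obtain ⟨p, hp, rfl⟩ := hq
    rw [hmemP] at hp
    rw [hmemP, pow_succ' K t, matmul_pos_iff K (K ^ t) hK (hKt t)]
    exact ⟨p.1, hσ p.1, hp⟩
  have hcardmono : ∀ t, (P t).card ≤ (P (t + 1)).card := by
    intro t
    calc (P t).card = ((P t).image f).card := (Finset.card_image_of_injective _ hinj).symm
      _ ≤ (P (t + 1)).card := Finset.card_le_card (hstep t)
  -- a plateau exists by t ≤ N^2
  have hexists : ∃ t, t ≤ N ^ 2 ∧ (P (t + 1)).card = (P t).card := by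
    by_contra hc
    push_neg at hc
    have hlt : ∀ t, t ≤ N ^ 2 → (P t).card < (P (t + 1)).card := by
      intro t ht
      exact lt_of_le_of_ne (hcardmono t) (Ne.symm (hc t ht))
    have hge : ∀ t, t ≤ N ^ 2 + 1 → t ≤ (P t).card := by
      intro t
      induction t with
      | zero => intro _; exact Nat.zero_le _
      | succ t ih =>
        intro ht
        have h1 : t ≤ N ^ 2 := Nat.lt_succ_iff.mp ht
        have h2 := hlt t h1
        have h3 := ih (by omega)
        omega
    have h4 := hge (N ^ 2 + 1) le_rfl
    have h5 : (P (N ^ 2 + 1)).card ≤ N ^ 2 := by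
      calc (P (N ^ 2 + 1)).card ≤ Fintype.card (Fin N × Fin N) := Finset.card_le_univ _
        _ = N ^ 2 := by simp [Fintype.card_prod, sq]
    omega
  obtain ⟨t, htle, hteq⟩ := hexists
  -- plateau: the image equality holds at t and persists
  have hplateau0 : P (t + 1) = (P t).image f := by
    refine (Finset.eq_of_subset_of_card_le (hstep t) ?_).symm
    rw [Finset.card_image_of_injective _ hinj, hteq]
  have hpersist : ∀ s, P (s + 1) = (P s).image f → P (s + 2) = (P (s + 1)).image f := by
    intro s hs
    refine Finset.Subset.antisymm ?_ (hstep (s + 1))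
    intro q hq
    rw [hmemP] at hq
    have hq2 : (0 : ℝ) < ((K ^ (s + 1)) * K) q.1 q.2 := by
      rw [← pow_succ]
      exact hq
    rw [matmul_pos_iff (K ^ (s + 1)) K (hKt _) hK] at hq2
    obtain ⟨a, h1, h2⟩ := hq2
    have hmem : ((q.1, a) : Fin N × Fin N) ∈ P (s + 1) := (hmemP _ _).2 h1
    rw [hs, Finset.mem_image] at hmem
    obtain ⟨p, hp, hpe⟩ := hmem
    simp only [hf, Prod.mk.injEq] at hpe
    obtain ⟨hpe1, hpe2⟩ := hpe
    rw [hmemP] at hp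
    have hp' : (0 : ℝ) < (K ^ (s + 1)) p.1 q.2 := by
      rw [pow_succ, matmul_pos_iff (K ^ s) K (hKt _) hK]
      exact ⟨a, by rw [← hpe2]; exact hp, h2⟩
    rw [Finset.mem_image]
    refine ⟨(p.1, q.2), (hmemP _ _).2 hp', ?_⟩
    simp only [hf]
    rw [hpe1]
  have hplateau : ∀ r, P (t + r + 1) = (P (t + r)).image f := by
    intro r
    induction r with
    | zero => exact hplateau0
    | succ r ih => exact hpersist (t + r) ih
  have hcardeq : ∀ s, t ≤ s → (P s).card = (P t).card := by
    intro s hs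
    obtain ⟨r, rfl⟩ := Nat.exists_eq_add_of_le hs
    induction r with
    | zero => rfl
    | succ r ih =>
      have := hplateau r
      rw [show t + (r + 1) = t + r + 1 by omega, this,
        Finset.card_image_of_injective _ hinj]
      exact ih (by omega)
  have htn : t ≤ n := le_trans htle (by
    have h1 : 1 ≤ N.factorial := Nat.one_le_iff_ne_zero.mpr (Nat.factorial_pos N).ne'
    calc N ^ 2 ≤ N ^ 2 + 1 := by omega
      _ = 1 * (N ^ 2 + 1) := (one_mul _).symm
      _ ≤ N.factorial * (N ^ 2 + 1) := Nat.mul_le_mul_right _ h1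
      _ = n := hn.symm)
  intro i j
  obtain ⟨m, hm, hBm⟩ := hirr i j
  have hmn : t ≤ n * m := le_trans htn (Nat.le_mul_of_pos_right n hm)
  -- P n ⊆ P (n * m)
  have hPsub : P n ⊆ P (n * m) := by
    intro p hp
    rw [hmemP] at hp ⊢
    rw [← hBpow m]
    have hBp : (0 : ℝ) < B p.1 p.2 := by rwa [← hKn]
    obtain ⟨m', rfl⟩ : ∃ m', m = m' + 1 := ⟨m - 1, by omega⟩
    rw [pow_succ, matmul_pos_iff (B ^ m') B (pow_entry_nonneg B hBnn m') hBnn]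
    refine ⟨p.1, ?_, hBp⟩
    rw [hBpow m']
    exact hdiagK m' p.1
  have hPeq : P n = P (n * m) := by
    refine (Finset.eq_of_subset_of_card_le hPsub ?_)
    rw [hcardeq (n * m) hmn, hcardeq n htn]
  have hij : (i, j) ∈ P (n * m) := by
    rw [hmemP, ← hBpow m]
    exact hBm
  rw [← hPeq, hmemP, hKn] at hij
  exact hij
end

section
/- Let U be an N×N strongly infinitely divisible nonnegative matrix that is block upper triangular in the form U = [[U₁₁, U₁₂], [0, U₂₂]], where U₁₁ is a k×k block and U₂₂ is an (N−k)×(N−k) block with 1 ≤ k < N. Then the trailing principal submatrix U₂₂ is a strongly infinitely divisible nonnegative matrix. -/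
open Matrix

namespace Stmt15Aux

variable {ι : Type*} [Fintype ι] [DecidableEq ι]

lemma pownn {K : Matrix ι ι ℝ} (h : IsNonnegMatrix K) : ∀ p, IsNonnegMatrix (K ^ p)
  | 0 => by
      intro i j
      rw [pow_zero]
      rcases eq_or_ne i j with rfl | hij
      · rw [Matrix.one_apply_eq]; exact zero_le_one
      · rw [Matrix.one_apply_ne hij]
  | (p+1) => by
      intro i j
      rw [pow_succ, Matrix.mul_apply]
      exact Finset.sum_nonneg fun x _ => mul_nonneg (pownn h p i x) (h x j)

def IsWalk (K : Matrix ι ι ℝ) (p : ℕ) (f : ℕ → ι) : Prop :=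
  ∀ s, s < p → 0 < K (f s) (f (s+1))

lemma walk_of_pos {K : Matrix ι ι ℝ} (h : IsNonnegMatrix K) :
    ∀ p i j, 0 < (K ^ p) i j → ∃ f : ℕ → ι, f 0 = i ∧ f p = j ∧ IsWalk K p f := by
  intro p
  induction p with
  | zero =>
      intro i j hpos
      rw [pow_zero] at hpos
      rcases eq_or_ne i j with rfl | hij
      · exact ⟨fun _ => i, rfl, rfl, fun s hs => absurd hs (Nat.not_lt_zero s)⟩
      · rw [Matrix.one_apply_ne hij] at hpos; exact absurd hpos (lt_irrefl 0)
  | succ p ih =>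
      intro i j hpos
      rw [pow_succ, Matrix.mul_apply] at hpos
      have hex : ∃ x, 0 < (K ^ p) i x * K x j := by
        by_contra hc
        push_neg at hc
        have hle : ∑ x, (K ^ p) i x * K x j ≤ 0 := Finset.sum_nonpos fun x _ => hc x
        linarith
      obtain ⟨x, hx⟩ := hex
      have h1 : 0 < (K ^ p) i x := by
        rcases (pownn h p i x).lt_or_eq with h' | h'
        · exact h'
        · rw [← h', zero_mul] at hx; exact absurd hx (lt_irrefl 0)
      have h2 : 0 < K x j := by
        rcases (h x j).lt_or_eq with h' | h'
        · exact h'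
        · rw [← h', mul_zero] at hx; exact absurd hx (lt_irrefl 0)
      obtain ⟨f, hf0, hfp, hfw⟩ := ih i x h1
      refine ⟨fun s => if s ≤ p then f s else j, by simp [hf0], by simp, ?_⟩
      intro s hs
      rcases Nat.lt_or_ge s p with hsp | hsp
      · have ha : s ≤ p := hsp.le
        have hb : s + 1 ≤ p := hsp
        simp only [if_pos ha, if_pos hb]
        exact hfw s hsp
      · have hsep : s = p := by omega
        simp only [if_pos (by omega : s ≤ p), if_neg (by omega : ¬ s + 1 ≤ p)]
        rw [hsep, hfp]; exact h2

lemma pos_of_walk {K : Matrix ι ι ℝ} (h : IsNonnegMatrix K) :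
    ∀ p (f : ℕ → ι), IsWalk K p f → 0 < (K ^ p) (f 0) (f p) := by
  intro p
  induction p with
  | zero =>
      intro f _
      rw [pow_zero, Matrix.one_apply_eq]; exact zero_lt_one
  | succ p ih =>
      intro f hw
      have hp : 0 < (K ^ p) (f 0) (f p) := ih f fun s hs => hw s (by omega)
      have hstep : 0 < K (f p) (f (p+1)) := hw p (by omega)
      rw [pow_succ, Matrix.mul_apply]
      have hle : (K ^ p) (f 0) (f p) * K (f p) (f (p+1)) ≤
          ∑ x, (K ^ p) (f 0) x * K x (f (p+1)) :=
        Finset.single_le_sum (f := fun x => (K ^ p) (f 0) x * K x (f (p+1)))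
          (fun x _ => mul_nonneg (pownn h p _ _) (h _ _)) (Finset.mem_univ (f p))
      exact lt_of_lt_of_le (mul_pos hp hstep) hle

lemma walk_pump {K : Matrix ι ι ℝ} {p s t : ℕ} {f : ℕ → ι}
    (hst : s < t) (htp : t ≤ p) (hcyc : f s = f t) (hw : IsWalk K p f) :
    ∃ g : ℕ → ι, g 0 = f 0 ∧ g (p + (t - s)) = f p ∧ IsWalk K (p + (t - s)) g ∧
      (∀ x, x ≤ t → g x = f x) := by
  refine ⟨fun x => if x ≤ t then f x else f (x - (t - s)), ?_, ?_, ?_, ?_⟩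
  · simp
  · have hgt : ¬ p + (t - s) ≤ t := by omega
    simp only [if_neg hgt]
    congr 1
    omega
  · intro x hx
    by_cases h1 : x + 1 ≤ t
    · have h0 : x ≤ t := by omega
      simp only [if_pos h0, if_pos h1]
      exact hw x (by omega)
    · by_cases h0 : x ≤ t
      · have hxt : x = t := by omega
        simp only [if_pos h0, if_neg h1]
        have e1 : x + 1 - (t - s) = s + 1 := by omega
        rw [e1, hxt, ← hcyc]
        exact hw s (by omega)
      · simp only [if_neg h0, if_neg h1]
        have e2 : x + 1 - (t - s) = (x - (t - s)) + 1 := by omega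
        rw [e2]
        exact hw (x - (t - s)) (by omega)
  · intro x hx
    simp only [if_pos hx]

lemma walk_pump_iter {K : Matrix ι ι ℝ} {p s t : ℕ} {f : ℕ → ι}
    (hst : s < t) (htp : t ≤ p) (hcyc : f s = f t) (hw : IsWalk K p f) :
    ∀ q, ∃ g : ℕ → ι, g 0 = f 0 ∧ g (p + q * (t - s)) = f p ∧
      IsWalk K (p + q * (t - s)) g := by
  have main : ∀ q, ∃ g : ℕ → ι, g 0 = f 0 ∧ g (p + q * (t - s)) = f p ∧
      IsWalk K (p + q * (t - s)) g ∧ (∀ x, x ≤ t → g x = f x) := by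
    intro q
    induction q with
    | zero => exact ⟨f, rfl, by simp, by simpa using hw, fun x _ => rfl⟩
    | succ q ih =>
        obtain ⟨g, hg0, hgend, hgw, hgpre⟩ := ih
        have hcyc' : g s = g t := by
          rw [hgpre s (by omega), hgpre t le_rfl, hcyc]
        obtain ⟨g', hg'0, hg'end, hg'w, hg'pre⟩ :=
          walk_pump hst (by omega : t ≤ p + q * (t - s)) hcyc' hgw
        have hlen : p + q * (t - s) + (t - s) = p + (q + 1) * (t - s) := by ring
        rw [hlen] at hg'end hg'w
        refine ⟨g', by rw [hg'0, hg0], by rw [hg'end, hgend], hg'w, ?_⟩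
        intro x hx
        rw [hg'pre x hx, hgpre x hx]
  intro q
  obtain ⟨g, h1, h2, h3, _⟩ := main q
  exact ⟨g, h1, h2, h3⟩

lemma pow_blocks {k m : ℕ} {M : Matrix (Fin k ⊕ Fin m) (Fin k ⊕ Fin m) ℝ}
    (h21 : ∀ i j, M (Sum.inr i) (Sum.inl j) = 0) :
    ∀ p, (∀ i j, (M ^ p) (Sum.inr i) (Sum.inl j) = 0) ∧
      (∀ i j, (M ^ p) (Sum.inr i) (Sum.inr j) = (M.toBlocks₂₂ ^ p) i j) := by
  intro p
  induction p with
  | zero =>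
      constructor
      · intro i j; rw [pow_zero]; exact Matrix.one_apply_ne (by simp)
      · intro i j
        rw [pow_zero, pow_zero]
        rcases eq_or_ne i j with rfl | hij
        · rw [Matrix.one_apply_eq, Matrix.one_apply_eq]
        · rw [Matrix.one_apply_ne (by simp [hij]), Matrix.one_apply_ne hij]
  | succ p ih =>
      obtain ⟨ih1, ih2⟩ := ih
      constructor
      · intro i j
        rw [pow_succ, Matrix.mul_apply, Fintype.sum_sum_type]
        have e1 : ∀ a : Fin k,
            (M ^ p) (Sum.inr i) (Sum.inl a) * M (Sum.inl a) (Sum.inl j) = 0 :=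
          fun a => by rw [ih1 i a, zero_mul]
        have e2 : ∀ b : Fin m,
            (M ^ p) (Sum.inr i) (Sum.inr b) * M (Sum.inr b) (Sum.inl j) = 0 :=
          fun b => by rw [h21 b j, mul_zero]
        rw [Finset.sum_eq_zero fun a _ => e1 a, Finset.sum_eq_zero fun b _ => e2 b, add_zero]
      · intro i j
        rw [pow_succ, Matrix.mul_apply, Fintype.sum_sum_type, pow_succ, Matrix.mul_apply]
        have e1 : ∀ a : Fin k,
            (M ^ p) (Sum.inr i) (Sum.inl a) * M (Sum.inl a) (Sum.inr j) = 0 :=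
          fun a => by rw [ih1 i a, zero_mul]
        rw [Finset.sum_eq_zero fun a _ => e1 a, zero_add]
        refine Finset.sum_congr rfl fun b _ => ?_
        rw [ih2 i b]
        rfl

end Stmt15Aux

theorem stmt15 (k m : ℕ) (hk : 0 < k) (hm : 0 < m)
    (U : Matrix (Fin k ⊕ Fin m) (Fin k ⊕ Fin m) ℝ) (hUnn : IsNonnegMatrix U)
    (hUdiv : IsStronglyInfinitelyDivisible U)
    (hblock : ∀ (i : Fin m) (j : Fin k), U (Sum.inr i) (Sum.inl j) = 0) :
    IsNonnegMatrix U.toBlocks₂₂ ∧ IsStronglyInfinitelyDivisible U.toBlocks₂₂ := by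
  classical
  have hnn22 : IsNonnegMatrix U.toBlocks₂₂ := fun i j => hUnn (Sum.inr i) (Sum.inr j)
  have key : ∀ n : ℕ, 0 < n → ∃ L : Matrix (Fin m) (Fin m) ℝ,
      IsNonnegMatrix L ∧ L ^ n = U.toBlocks₂₂ := by
    intro n hn
    set a := Nat.factorial (k + m) with ha
    have ha1 : 0 < a := Nat.factorial_pos (k + m)
    have haV : k + m ≤ a := Nat.self_le_factorial (k + m)
    obtain ⟨K, hKnn, hKpow⟩ := hUdiv.1 (a * n) (Nat.mul_pos ha1 hn)
    have hM21 : ∀ i j, (K ^ a) (Sum.inr i) (Sum.inl j) = 0 := by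
      intro i j
      by_contra hne
      have hpos : 0 < (K ^ a) (Sum.inr i) (Sum.inl j) :=
        (Stmt15Aux.pownn hKnn a _ _).lt_of_ne (Ne.symm hne)
      obtain ⟨f, hf0, hfa, hfw⟩ := Stmt15Aux.walk_of_pos hKnn a _ _ hpos
      obtain ⟨s', t', hst', heq'⟩ := Fintype.exists_ne_map_eq_of_card_lt
        (fun x : Fin (k + m + 1) => f x)
        (by simp)
      have hs'lt := s'.isLt
      have ht'lt := t'.isLt
      have hval : (s' : ℕ) ≠ (t' : ℕ) := fun h => hst' (Fin.ext h)
      obtain ⟨s, t, hst, hts, heq⟩ : ∃ s t : ℕ, s < t ∧ t ≤ k + m ∧ f s = f t := by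
        rcases Nat.lt_or_ge (s' : ℕ) (t' : ℕ) with h | h
        · exact ⟨s', t', h, by omega, heq'⟩
        · exact ⟨t', s', by omega, by omega, heq'.symm⟩
      have hcdvd : (t - s) ∣ a := Nat.dvd_factorial (by omega) (by omega)
      obtain ⟨e, he⟩ := hcdvd
      have htp : t ≤ a := le_trans hts haV
      obtain ⟨g, hg0, hgend, hgw⟩ :=
        Stmt15Aux.walk_pump_iter hst htp heq hfw ((n - 1) * e)
      have hlen : a + (n - 1) * e * (t - s) = a * n := by
        obtain ⟨n', rfl⟩ : ∃ n', n = n' + 1 := ⟨n - 1, by omega⟩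
        have h1 : (n' + 1 - 1) * e * (t - s) = n' * a := by
          rw [Nat.add_sub_cancel, he]; ring
        rw [h1]; ring
      have hposU := Stmt15Aux.pos_of_walk hKnn (a + (n - 1) * e * (t - s)) g hgw
      rw [hg0, hf0, hgend, hfa, hlen, hKpow, hblock i j] at hposU
      exact lt_irrefl 0 hposU
    refine ⟨(K ^ a).toBlocks₂₂, ?_, ?_⟩
    · intro i j
      exact Stmt15Aux.pownn hKnn a (Sum.inr i) (Sum.inr j)
    · ext i j
      have h2 := (Stmt15Aux.pow_blocks hM21 n).2 i j
      rw [← pow_mul, hKpow] at h2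
      exact h2.symm
  have hU21 : U.toBlocks₂₁ = 0 := by
    ext i j
    exact hblock i j
  have hdetU : U.det = U.toBlocks₁₁.det * U.toBlocks₂₂.det := by
    conv_lhs => rw [← Matrix.fromBlocks_toBlocks U]
    rw [hU21, Matrix.det_fromBlocks_zero₂₁]
  have hdet22ne : U.toBlocks₂₂.det ≠ 0 := by
    intro h0
    have hdpos : (0:ℝ) < U.det := hUdiv.2
    rw [hdetU, h0, mul_zero] at hdpos
    exact lt_irrefl 0 hdpos
  obtain ⟨L2, hL2nn, hL2⟩ := key 2 (by norm_num)
  have h1 : U.toBlocks₂₂.det = L2.det ^ 2 := by rw [← hL2, Matrix.det_pow]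
  have h2 : L2.det ≠ 0 := by
    intro h
    rw [h, zero_pow (by norm_num)] at h1
    exact hdet22ne h1
  have hdetpos : 0 < U.toBlocks₂₂.det := by
    rw [h1]
    exact lt_of_le_of_ne (sq_nonneg _) (Ne.symm (pow_ne_zero 2 h2))
  exact ⟨hnn22, key, hdetpos⟩
end

section
/- Let P be an N×N stochastic matrix that is an inverse M-matrix. Then there exist a real number ε with 0 ≤ ε < 1 and an N×N stochastic matrix H such that P = (1−ε) · (I − ε·H)^{−1}. -/
/-
Write `Q = P⁻¹`. Since `P 𝟙 = 𝟙`, also `Q 𝟙 = 𝟙`, and `Q` is a Z-matrix. For small `t > 0` the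
matrix `1 - t Q` is then nonnegative with row sums `1 - t`, so `H = (1 - t)⁻¹ (1 - t Q)` is
stochastic. With `ε = 1 - t` we get `1 - ε H = t Q`, whence `(1 - ε) (1 - ε H)⁻¹ = t (t Q)⁻¹ = P`.
-/

open Matrix

section

variable {ι : Type*} [Fintype ι] [DecidableEq ι]

lemma sum_inv_apply_eq_one {P : Matrix ι ι ℝ} (hP : IsUnit P.det) (hrow : ∀ i, ∑ j, P i j = 1)
    (i : ι) : ∑ j, P⁻¹ i j = 1 := by
  calc ∑ j, P⁻¹ i j = ∑ j, (P⁻¹ * P) i j := by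
        simp only [mul_apply]
        rw [Finset.sum_comm]
        simp only [← Finset.mul_sum, hrow, mul_one]
    _ = 1 := by simp [nonsing_inv_mul P hP, one_apply]

lemma isStochasticMatrix_smul_one_sub_smul {Q : Matrix ι ι ℝ} (hQ : IsZMatrix Q)
    (hrow : ∀ i, ∑ j, Q i j = 1) {t : ℝ} (ht0 : 0 ≤ t) (ht1 : t < 1)
    (hdiag : ∀ i, t * Q i i ≤ 1) : IsStochasticMatrix ((1 - t)⁻¹ • (1 - t • Q)) := by
  have hs : 0 < (1 - t)⁻¹ := inv_pos.mpr (sub_pos.mpr ht1)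
  refine ⟨fun i j => ?_, fun i => ?_⟩
  · simp only [Matrix.smul_apply, Matrix.sub_apply, smul_eq_mul]
    refine mul_nonneg hs.le ?_
    rcases eq_or_ne i j with rfl | hij
    · simpa [one_apply_eq] using hdiag i
    · simpa [one_apply_ne hij] using mul_nonpos_of_nonneg_of_nonpos ht0 (hQ i j hij)
  · simp only [Matrix.smul_apply, Matrix.sub_apply, smul_eq_mul]
    rw [← Finset.mul_sum, Finset.sum_sub_distrib, ← Finset.mul_sum, hrow]
    simp [one_apply, inv_mul_cancel₀ (sub_pos.mpr ht1).ne']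

end

lemma exists_pos_lt_one_forall_mul_le_one {ι : Type*} [Finite ι] (f : ι → ℝ) :
    ∃ t : ℝ, 0 < t ∧ t < 1 ∧ ∀ i, t * f i ≤ 1 := by
  obtain ⟨M, hM⟩ := Finite.bddAbove_range f
  have hpos : 0 < max M 1 + 1 := by positivity
  refine ⟨(max M 1 + 1)⁻¹, inv_pos.mpr hpos, inv_lt_one_of_one_lt₀ (by linarith [le_max_right M 1]),
    fun i => ?_⟩
  rw [inv_mul_le_iff₀ hpos, mul_one]
  linarith [hM (Set.mem_range_self i), le_max_left M 1]

theorem stmt18 (N : ℕ) (P : Matrix (Fin N) (Fin N) ℝ) (hP : IsStochasticMatrix P)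
    (hPM : IsInverseMMatrix P) :
    ∃ ε : ℝ, 0 ≤ ε ∧ ε < 1 ∧ ∃ H : Matrix (Fin N) (Fin N) ℝ, IsStochasticMatrix H ∧
      P = (1 - ε) • (1 - ε • H)⁻¹ := by
  obtain ⟨hdet, -, hZ⟩ := hPM
  obtain ⟨t, ht0, ht1, hdiag⟩ := exists_pos_lt_one_forall_mul_le_one fun i => P⁻¹ i i
  have hε : 1 - t ≠ 0 := (sub_pos.mpr ht1).ne'
  refine ⟨1 - t, by linarith, by linarith, (1 - t)⁻¹ • (1 - t • P⁻¹),
    isStochasticMatrix_smul_one_sub_smul hZ (sum_inv_apply_eq_one hdet hP.2) ht0.le ht1 hdiag, ?_⟩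
  have hresolvent : 1 - (1 - t) • ((1 - t)⁻¹ • (1 - t • P⁻¹)) = t • P⁻¹ := by
    rw [smul_smul, mul_inv_cancel₀ hε, one_smul, sub_sub_cancel]
  have hinv : (t • P⁻¹)⁻¹ = t⁻¹ • P := inv_eq_right_inv <| by
    rw [smul_mul_smul_comm, mul_inv_cancel₀ ht0.ne', nonsing_inv_mul P hdet, one_smul]
  rw [hresolvent, hinv, sub_sub_cancel, smul_smul, mul_inv_cancel₀ ht0.ne', one_smul]
end

section
/- Let P be an N×N embeddable stochastic matrix, and let R be an intensity matrix with exp(R) = P. Then every (complex) eigenvalue μ of R satisfies |Im(μ)| ≤ −log(det(P)). -/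
/-
The function `t ↦ det (exp (t • R))` is multiplicative in `t` and has derivative `trace R` at
`0`, so `det (exp R) = exp (trace R)`. Hence `-log (det P) = -trace R = ∑ i, -R i i`,
a sum of nonnegative terms. By Gershgorin's theorem every eigenvalue `μ` of `R` lies in a disc
centred at a real number `R k k` of radius `∑ j ≠ k, R k j = -R k k`, so `|Im μ| ≤ -R k k`.
-/

open Matrix

open NormedSpace

theorem eq_exp_mul_of_hasDerivAt {f : ℝ → ℝ} {c : ℝ} (hf₀ : f 0 = 1)
    (hf : ∀ t, HasDerivAt f (f t * c) t) (t : ℝ) : f t = Real.exp (c * t) := by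
  have hu : ∀ s, HasDerivAt (fun s => f s * Real.exp (-(c * s))) 0 s := fun s =>
    ((hf s).fun_mul ((hasDerivAt_id' s).const_mul c).fun_neg.exp).congr_deriv (by ring)
  have hconst := is_const_of_deriv_eq_zero (fun s => (hu s).differentiableAt)
    (fun s => (hu s).deriv) t 0
  simp only [hf₀, mul_zero, neg_zero, Real.exp_zero, mul_one] at hconst
  rwa [Real.exp_neg, mul_inv_eq_one₀ (Real.exp_pos _).ne'] at hconst

namespace Matrix

variable {n : Type*} [Fintype n] [DecidableEq n]

theorem prod_erase_one_apply_perm_eq_zero {α : Type*} [CommMonoidWithZero α]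
    {σ : Equiv.Perm n} (hσ : σ ≠ 1) (i : n) :
    ∏ j ∈ Finset.univ.erase i, (1 : Matrix n n α) (σ j) j = 0 := by
  obtain ⟨a, hai, ha⟩ : ∃ a ≠ i, σ a ≠ a := by
    by_contra! h
    refine hσ (Equiv.ext fun a => ?_)
    by_cases hai : a = i
    · subst hai
      by_contra hσa
      exact hσa (σ.injective (h _ hσa))
    · exact h a hai
  exact Finset.prod_eq_zero (Finset.mem_erase.mpr ⟨hai, Finset.mem_univ _⟩) (one_apply_ne ha)

theorem hasDerivAt_det_of_eq_one {γ : ℝ → Matrix n n ℝ} {A : Matrix n n ℝ} (hγ₀ : γ 0 = 1)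
    (hγ : ∀ i j, HasDerivAt (fun t => γ t i j) (A i j) 0) :
    HasDerivAt (fun t => (γ t).det) A.trace 0 := by
  simp only [det_apply']
  refine (HasDerivAt.fun_sum fun σ (_ : σ ∈ Finset.univ) =>
    (HasDerivAt.fun_finsetProd fun i (_ : i ∈ Finset.univ) => hγ (σ i) i).const_mul
      ((Equiv.Perm.sign σ : ℤ) : ℝ)).congr_deriv ?_
  rw [Finset.sum_eq_single (1 : Equiv.Perm n)]
  · simp [hγ₀, trace]
  · intro σ _ hσ
    simp [hγ₀, prod_erase_one_apply_perm_eq_zero hσ]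
  · simp

theorem hasDerivAt_exp_smul_apply (R : Matrix n n ℝ) (i j : n) :
    HasDerivAt (fun t : ℝ => exp (t • R) i j) (R i j) 0 := by
  -- `exp` does not depend on the norm; any normed-algebra structure inducing the product
  -- topology gives access to the derivative of `t ↦ exp (t • R)`.
  let _ : NormedRing (Matrix n n ℝ) := Matrix.linftyOpNormedRing
  let _ : NormedAlgebra ℝ (Matrix n n ℝ) := Matrix.linftyOpNormedAlgebra
  have h := hasDerivAt_exp_smul_const (𝕂 := ℝ) R 0
  rw [zero_smul, exp_zero, one_mul] at h
  exact hasDerivAt_pi.1 (hasDerivAt_pi.1 h i) j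

theorem hasDerivAt_det_exp_smul (R : Matrix n n ℝ) (t : ℝ) :
    HasDerivAt (fun s : ℝ => (exp (s • R)).det) ((exp (t • R)).det * R.trace) t := by
  have h₀ : HasDerivAt (fun s : ℝ => (exp (s • R)).det) R.trace 0 :=
    hasDerivAt_det_of_eq_one (by simp) (hasDerivAt_exp_smul_apply R)
  have hmul : ∀ s : ℝ, (exp ((t + s) • R)).det = (exp (t • R)).det * (exp (s • R)).det := by
    intro s
    rw [add_smul, exp_add_of_commute _ _ ((Commute.refl R).smul_left t |>.smul_right s), det_mul]
  have hshift : HasDerivAt (fun s : ℝ => (exp ((t + s) • R)).det)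
      ((exp (t • R)).det * R.trace) (t + -t) := by
    simpa only [hmul, add_neg_cancel] using h₀.const_mul (exp (t • R)).det
  simpa using hshift.comp_add_const t (-t)

theorem det_exp (R : Matrix n n ℝ) : (exp R).det = Real.exp R.trace := by
  simpa [mul_comm] using
    eq_exp_mul_of_hasDerivAt (f := fun s : ℝ => (exp (s • R)).det) (by simp)
      (hasDerivAt_det_exp_smul R) 1

theorem exists_abs_im_le_of_mem_roots_charpoly (A : Matrix n n ℝ) {μ : ℂ}
    (hμ : μ ∈ (A.map Complex.ofReal).charpoly.roots) :
    ∃ k, |μ.im| ≤ ∑ j ∈ Finset.univ.erase k, |A k j| := by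
  have hμ' : Module.End.HasEigenvalue (toLin' (A.map Complex.ofReal)) μ := by
    rw [Module.End.hasEigenvalue_iff_isRoot_charpoly, charpoly_toLin']
    exact Polynomial.isRoot_of_mem_roots hμ
  obtain ⟨k, hk⟩ := eigenvalue_mem_ball hμ'
  refine ⟨k, ?_⟩
  rw [mem_closedBall_iff_norm] at hk
  calc |μ.im| = |(μ - A k k).im| := by simp
    _ ≤ ‖μ - A k k‖ := Complex.abs_im_le_norm _
    _ ≤ _ := hk
    _ = _ := by simp [Complex.norm_real]

end Matrix

namespace IsIntensityMatrix

variable {n : Type*} [Fintype n] {R : Matrix n n ℝ}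

theorem sum_erase_eq_neg_diag [DecidableEq n] (hR : IsIntensityMatrix R) (i : n) :
    ∑ j ∈ Finset.univ.erase i, R i j = -R i i := by
  linarith [Finset.add_sum_erase Finset.univ (R i) (Finset.mem_univ i), hR.2 i]

theorem diag_nonpos (hR : IsIntensityMatrix R) (i : n) : R i i ≤ 0 := by
  classical
  have := Finset.sum_nonneg fun j (hj : j ∈ Finset.univ.erase i) =>
    hR.1 i j (Finset.ne_of_mem_erase hj).symm
  linarith [hR.sum_erase_eq_neg_diag i]

theorem neg_diag_le_neg_trace (hR : IsIntensityMatrix R) (i : n) : -R i i ≤ -R.trace := by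
  rw [trace, ← Finset.sum_neg_distrib]
  exact Finset.single_le_sum (f := fun i => -R i i) (fun j _ => neg_nonneg.2 (hR.diag_nonpos j))
    (Finset.mem_univ i)

theorem abs_im_le_neg_trace [DecidableEq n] (hR : IsIntensityMatrix R) {μ : ℂ}
    (hμ : μ ∈ (R.map Complex.ofReal).charpoly.roots) : |μ.im| ≤ -R.trace := by
  obtain ⟨k, hk⟩ := R.exists_abs_im_le_of_mem_roots_charpoly hμ
  have hrow : ∑ j ∈ Finset.univ.erase k, |R k j| = -R k k := by
    rw [← hR.sum_erase_eq_neg_diag k]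
    exact Finset.sum_congr rfl fun j hj =>
      abs_of_nonneg (hR.1 k j (Finset.ne_of_mem_erase hj).symm)
  exact (hk.trans_eq hrow).trans (hR.neg_diag_le_neg_trace k)

end IsIntensityMatrix

theorem stmt19_general (N : ℕ) (P : Matrix (Fin N) (Fin N) ℝ)
    (R : Matrix (Fin N) (Fin N) ℝ) (hR : IsIntensityMatrix R)
    (hexp : NormedSpace.exp R = P) :
    ∀ μ : ℂ, μ ∈ (R.map Complex.ofReal).charpoly.roots →
      |μ.im| ≤ -Real.log P.det := by
  intro μ hμ
  rw [← hexp, Matrix.det_exp, Real.log_exp]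
  exact hR.abs_im_le_neg_trace hμ

theorem stmt19 (N : ℕ) (P : Matrix (Fin N) (Fin N) ℝ) (hP : IsStochasticMatrix P)
    (R : Matrix (Fin N) (Fin N) ℝ) (hR : IsIntensityMatrix R)
    (hexp : NormedSpace.exp R = P) :
    ∀ μ : ℂ, μ ∈ (R.map Complex.ofReal).charpoly.roots →
      |μ.im| ≤ -Real.log P.det :=
  stmt19_general N P R hR hexp
end
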